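/- Let g(z) = a·z² with a ∈ ℂ, a ≠ 0, and let λ ∈ ℂ with 0 < |λ| ≤ 2|a|. Then exp(g/λ) does not belong to F^∞_{ψ_m}, i.e., sup_{z∈ℂ} exp(Re(a·z²/λ) − ψ_m(z)) = ∞ for every nonnegative integer m ≥ 1 (and also for m = 0 when |λ| < 2|a|). -/

import Mathlib

/-!
Choose a unimodular direction `w` in which `a z² / λ` is real and positive: along the ray
`z = t w` the exponent equals `(|a|/|λ| - 1/2) t² + m log (1 + t)`. The hypotheses make the
quadratic coefficient nonnegative and, when `m = 0`, positive, so the exponent tends to `+∞`.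
-/

/-- The weight function ψ_m(z) = |z|²/2 − m·log(1+|z|). -/
noncomputable def psi (m : ℕ) (z : ℂ) : ℝ :=
  ‖z‖ ^ 2 / 2 - m * Real.log (1 + ‖z‖)

open Filter Complex

lemma exists_norm_eq_one_mul_sq_eq_norm (c : ℂ) :
    ∃ w : ℂ, ‖w‖ = 1 ∧ c * w ^ 2 = ‖c‖ := by
  refine ⟨exp (↑(-arg c / 2) * I), norm_exp_ofReal_mul_I _, ?_⟩
  have hsq : exp (↑(-arg c / 2) * I) ^ 2 = exp (-(arg c * I)) := by
    rw [← exp_nat_mul]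
    push_cast
    ring_nf
  nth_rewrite 1 [hsq, ← norm_mul_exp_arg_mul_I c]
  rw [mul_assoc, ← exp_add, add_neg_cancel, exp_zero, mul_one]

lemma psi_ofReal_mul {w : ℂ} (hw : ‖w‖ = 1) (m : ℕ) {t : ℝ} (ht : 0 ≤ t) :
    psi m (t * w) = t ^ 2 / 2 - m * Real.log (1 + t) := by
  rw [psi, norm_mul, hw, mul_one, norm_real, Real.norm_of_nonneg ht]

lemma tendsto_sub_half_mul_sq_add_mul_log (m : ℕ) {r : ℝ} (hr : 1 / 2 ≤ r)
    (h : 1 ≤ m ∨ 1 / 2 < r) :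
    Tendsto (fun t : ℝ => (r - 1 / 2) * t ^ 2 + m * Real.log (1 + t)) atTop atTop := by
  have hlog : Tendsto (fun t : ℝ => Real.log (1 + t)) atTop atTop :=
    Real.tendsto_log_atTop.comp (tendsto_atTop_add_const_left _ 1 tendsto_id)
  have hlog_nonneg : ∀ᶠ t : ℝ in atTop, 0 ≤ Real.log (1 + t) :=
    (eventually_ge_atTop 0).mono fun t ht => Real.log_nonneg (by linarith)
  rcases h with hm | hr'
  · refine tendsto_atTop_mono' _ (hlog_nonneg.mono fun t ht => ?_) hlog
    have : (1 : ℝ) ≤ m := by exact_mod_cast hm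
    nlinarith [sq_nonneg t]
  · refine tendsto_atTop_mono' _ (hlog_nonneg.mono fun t ht => ?_)
      ((tendsto_pow_atTop two_ne_zero).const_mul_atTop (sub_pos.mpr hr'))
    have : 0 ≤ (m : ℝ) * Real.log (1 + t) := by positivity
    linarith

theorem stmt_6_general (m : ℕ) (a lam : ℂ)
    (h0 : 0 < ‖lam‖) (h1 : ‖lam‖ ≤ 2 * ‖a‖)
    (h2 : 1 ≤ m ∨ ‖lam‖ < 2 * ‖a‖) :
    ¬ BddAbove (Set.range fun z : ℂ => Real.exp ((a * z ^ 2 / lam).re - psi m z)) := by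
  have hr : 1 / 2 ≤ ‖a / lam‖ := by rw [norm_div, le_div_iff₀ h0]; linarith
  have h2' : 1 ≤ m ∨ 1 / 2 < ‖a / lam‖ :=
    h2.imp_right fun h => by rw [norm_div, lt_div_iff₀ h0]; linarith
  set r := ‖a / lam‖
  obtain ⟨w, hw, hcw⟩ := exists_norm_eq_one_mul_sq_eq_norm (a / lam)
  have hray : ∀ t : ℝ, 0 ≤ t →
      (r - 1 / 2) * t ^ 2 + m * Real.log (1 + t) = (a * (t * w) ^ 2 / lam).re - psi m (t * w) := by
    intro t ht
    have : a * (t * w) ^ 2 / lam = ((t ^ 2 * r : ℝ) : ℂ) := by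
      push_cast
      linear_combination (t : ℂ) ^ 2 * hcw
    rw [this, ofReal_re, psi_ofReal_mul hw m ht]
    ring
  have htendsto : Tendsto (fun t : ℝ => Real.exp ((a * (t * w) ^ 2 / lam).re - psi m (t * w)))
      atTop atTop :=
    Real.tendsto_exp_atTop.comp <| (tendsto_sub_half_mul_sq_add_mul_log m hr h2').congr'
      ((eventually_ge_atTop 0).mono hray)
  exact fun hbdd => not_bddAbove_of_tendsto_atTop htendsto
    (hbdd.mono (Set.range_comp_subset_range (fun t : ℝ => (t : ℂ) * w)
      fun z => Real.exp ((a * z ^ 2 / lam).re - psi m z)))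

/-- For g(z) = az² (a ≠ 0) and 0 < |λ| ≤ 2|a|, the function exp(g/λ) does not belong to
F^∞_{ψ_m}: sup_z exp(Re(az²/λ) − ψ_m(z)) = ∞, for every m ≥ 1,
and also for m = 0 when |λ| < 2|a|. -/
theorem stmt_6 (m : ℕ) (a lam : ℂ) (ha : a ≠ 0)
    (h0 : 0 < ‖lam‖) (h1 : ‖lam‖ ≤ 2 * ‖a‖)
    (h2 : 1 ≤ m ∨ ‖lam‖ < 2 * ‖a‖) :
    ¬ BddAbove (Set.range fun z : ℂ => Real.exp ((a * z ^ 2 / lam).re - psi m z)) :=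
  stmt_6_general m a lam h0 h1 h2
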